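/- arXiv:1708.07372 — 2 statements merged into one kernel-verified Lean document; each statement's English description precedes it below -/
import Mathlib

section
/- Let C be a d-clutter on a finite vertex set V with C not complete, Δ = ⟨C⟩ and Γ = ⟨C^∨⟩. Let v be a shedding vertex of Γ and let e ∈ MS(C) with v ∈ e. Then v is a shedding vertex of ⟨(C − e)^∨⟩. Moreover, setting Δ′ = ⟨C − e⟩ and e′ = e \ {v}, one has Facets(link_{Δ′}(v)) = Facets(link_Δ(v)) − e′, the deletion of the maximal subcircuit e′ in the (d−1)-clutter Facets(link_Δ(v)). -/
namespace ClutterPaper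

variable {α : Type*} [DecidableEq α]

/-- `C` is a uniform clutter on vertex set `V` all of whose circuits have cardinality `c`
(i.e. a `(c-1)`-dimensional uniform clutter). -/
def IsClutter (V : Finset α) (c : ℕ) (C : Finset (Finset α)) : Prop :=
  ∀ F ∈ C, F ⊆ V ∧ F.card = c

/-- The complement clutter `C̄`: all `c`-subsets of `V` not in `C`. -/
def compClutter (V : Finset α) (c : ℕ) (C : Finset (Finset α)) : Finset (Finset α) :=
  V.powersetCard c \ C

/-- `C^∨ = { V \ F | F ∈ C̄ }`. -/
def clutterDual (V : Finset α) (c : ℕ) (C : Finset (Finset α)) : Finset (Finset α) :=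
  (compClutter V c C).image fun F => V \ F

/-- `A` is a clique of the clutter `C` (with circuit cardinality `c`) on vertex set `V`:
all `c`-subsets of `A` are circuits. -/
def IsClique (V : Finset α) (c : ℕ) (C : Finset (Finset α)) (A : Finset α) : Prop :=
  A ⊆ V ∧ ∀ F ⊆ A, F.card = c → F ∈ C

/-- The closed neighborhood `N_C[e] = e ∪ { v ∈ V | e ∪ {v} ∈ C }`. -/
def closedNbhd (V : Finset α) (C : Finset (Finset α)) (e : Finset α) : Finset α :=
  e ∪ V.filter fun v => insert v e ∈ C

/-- `e` is a maximal subcircuit of the clutter `C` with circuit cardinality `c`: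
`e` has cardinality `c - 1` and is contained in some circuit. -/
def IsMS (c : ℕ) (C : Finset (Finset α)) (e : Finset α) : Prop :=
  e.card + 1 = c ∧ ∃ F ∈ C, e ⊆ F

/-- `e` is a simplicial maximal subcircuit: a maximal subcircuit whose closed
neighborhood is a clique. -/
def IsSMS (V : Finset α) (c : ℕ) (C : Finset (Finset α)) (e : Finset α) : Prop :=
  IsMS c C e ∧ IsClique V c C (closedNbhd V C e)

/-- `e` is a free maximal subcircuit: contained in exactly one circuit. -/
def IsFreeMS (c : ℕ) (C : Finset (Finset α)) (e : Finset α) : Prop :=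
  e.card + 1 = c ∧ ∃! F, F ∈ C ∧ e ⊆ F

/-- Deletion `C − e` of a maximal subcircuit: the circuits not containing `e`. -/
def delMS (C : Finset (Finset α)) (e : Finset α) : Finset (Finset α) :=
  C.filter fun F => ¬ e ⊆ F

/-- Deletion of a vertex: circuits (or faces) not containing `v`. -/
def delVert (C : Finset (Finset α)) (v : α) : Finset (Finset α) :=
  C.filter fun F => v ∉ F

/-- Chordality of a uniform clutter (circuit cardinality `c`) on `V`: there is a sequence of
deletions of simplicial maximal subcircuits ending in the clutter with no circuits. -/
inductive Chordal (V : Finset α) (c : ℕ) : Finset (Finset α) → Prop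
  | empty : Chordal V c ∅
  | step {C : Finset (Finset α)} (e : Finset α) :
      IsSMS V c C e → Chordal V c (delMS C e) → Chordal V c C

/-- The ascent `C⁺` of a clutter with circuit cardinality `c`: all `(c+1)`-subsets of `V`
that are cliques of `C`. -/
def ascent (V : Finset α) (c : ℕ) (C : Finset (Finset α)) : Finset (Finset α) :=
  (V.powersetCard (c + 1)).filter fun A => A.powersetCard c ⊆ C

/-- The simplicial complex `⟨D⟩` generated by a clutter `D`: all subsets of its elements. -/
def complexOf (D : Finset (Finset α)) : Finset (Finset α) :=
  D.biUnion Finset.powerset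

/-- A family of finsets is a simplicial complex if it is downward closed. -/
def IsComplex (Δ : Finset (Finset α)) : Prop :=
  ∀ F ∈ Δ, ∀ G ⊆ F, G ∈ Δ

/-- The facets (maximal faces) of a simplicial complex. -/
def facets (Δ : Finset (Finset α)) : Finset (Finset α) :=
  Δ.filter fun F => ∀ G ∈ Δ, F ⊆ G → F = G

/-- `link_Δ(v) = { F \ {v} | v ∈ F ∈ Δ }`. -/
def link (Δ : Finset (Finset α)) (v : α) : Finset (Finset α) :=
  (Δ.filter fun F => v ∈ F).image fun F => F.erase v

/-- `v` is a shedding vertex of `Δ`: no face of `link_Δ(v)` is a facet of `Δ − v`. -/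
def Shedding (Δ : Finset (Finset α)) (v : α) : Prop :=
  ∀ F ∈ link Δ v, F ∉ facets (delVert Δ v)

/-- Alexander dual of a simplicial complex on vertex set `V`:
`Δ^∨ = { V \ F | F ⊆ V, F ∉ Δ }`. -/
def alexDual (V : Finset α) (Δ : Finset (Finset α)) : Finset (Finset α) :=
  (V.powerset.filter fun F => F ∉ Δ).image fun F => V \ F

/-- `Δ` is pure with all facets of cardinality `c` (dimension `c - 1`), and nonempty. -/
def PureDim (Δ : Finset (Finset α)) (c : ℕ) : Prop :=
  Δ.Nonempty ∧ ∀ F ∈ facets Δ, F.card = c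

/-- Vertex decomposability of a simplicial complex. -/
inductive VDecomp : Finset (Finset α) → Prop
  | simplex {Δ : Finset (Finset α)} : (facets Δ).card = 1 → VDecomp Δ
  | shed {Δ : Finset (Finset α)} (v : α) : Shedding Δ v →
      VDecomp (link Δ v) → VDecomp (delVert Δ v) → VDecomp Δ

/-- The vertex set of a clutter (or of the complex it generates). -/
def vertexSet (Ω : Finset (Finset α)) : Finset α :=
  Ω.biUnion id

/-- `Ω` (given by its set of facets, each of cardinality `d+1`) is a `d`-cycle:
nonempty, pure of dimension `d`, `d`-path connected, and every `(d-1)`-dimensional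
face lies in an even number of `d`-faces. -/
def IsCycle (d : ℕ) (Ω : Finset (Finset α)) : Prop :=
  Ω.Nonempty ∧ (∀ F ∈ Ω, F.card = d + 1) ∧
    (∀ F ∈ Ω, ∀ G ∈ Ω,
      Relation.ReflTransGen (fun A B => A ∈ Ω ∧ B ∈ Ω ∧ (A ∩ B).card = d) F G) ∧
    ∀ e : Finset α, e.card = d → Even ((Ω.filter fun F => e ⊆ F).card)

/-- A face-minimal `d`-cycle: no `d`-cycle has a strictly smaller set of `d`-faces. -/
def FaceMinimalCycle (d : ℕ) (Ω : Finset (Finset α)) : Prop :=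
  IsCycle d Ω ∧ ∀ Ω' : Finset (Finset α), IsCycle d Ω' → Ω' ⊆ Ω → Ω' = Ω

/-- `Ω` is `d`-complete: it contains every `(d+1)`-subset of its vertex set. -/
def DComplete (d : ℕ) (Ω : Finset (Finset α)) : Prop :=
  ∀ F ⊆ vertexSet Ω, F.card = d + 1 → F ∈ Ω

/-- The complex `⟨C⟩` generated by the `d`-dimensional clutter `C` is `d`-chorded. -/
def Chorded (d : ℕ) (C : Finset (Finset α)) : Prop :=
  ∀ Ω : Finset (Finset α), FaceMinimalCycle d Ω → Ω ⊆ C → ¬ DComplete d Ω →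
    ∃ (k : ℕ) (Ωs : Fin k → Finset (Finset α)), 2 ≤ k ∧
      (∀ i, IsCycle d (Ωs i) ∧ Ωs i ⊆ C) ∧
      (∀ F ∈ Ω, ∃ i, F ∈ Ωs i) ∧
      (∀ F ∈ Ω, Odd ((Finset.univ.filter fun i => F ∈ Ωs i).card)) ∧
      (∀ F : Finset α, (∃ i, F ∈ Ωs i) → F ∉ Ω →
        Even ((Finset.univ.filter fun i => F ∈ Ωs i).card)) ∧
      ∀ i, vertexSet (Ωs i) ⊂ vertexSet Ω

/-- The circuits of `D` admit an admissible order. -/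
def HasAdmissibleOrder (D : Finset (Finset α)) : Prop :=
  ∃ (t : ℕ) (F : Fin t → Finset α), Function.Injective F ∧
    (∀ G, G ∈ D ↔ ∃ i, F i = G) ∧
    ∀ i j : Fin t, j < i →
      ∃ l ∈ F j \ F i, ∃ k : Fin t, k < i ∧ F k \ F i = {l}

/-- Contraction `D/v` of a (not necessarily uniform) clutter: the minimal sets of
`{ e \ {v} | e ∈ D }`. -/
def contractAux (D : Finset (Finset α)) (v : α) : Finset (Finset α) :=
  D.image fun e => e.erase v

def contract (D : Finset (Finset α)) (v : α) : Finset (Finset α) :=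
  (contractAux D v).filter fun e => ∀ f ∈ contractAux D v, f ⊆ e → f = e

/-- `D` has a simplicial vertex (trivially true if `D` has no vertices). -/
def HasSimpVertex (D : Finset (Finset α)) : Prop :=
  vertexSet D = ∅ ∨ ∃ v ∈ vertexSet D, ∀ e₁ ∈ D, ∀ e₂ ∈ D, v ∈ e₁ → v ∈ e₂ →
    ∃ e₃ ∈ D, e₃ ⊆ (e₁ ∪ e₂).erase v

/-- `D` is W-chordal: every clutter obtained from `D` by a sequence of vertex deletions
and contractions has a simplicial vertex. -/
def WChordal (D : Finset (Finset α)) : Prop :=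
  ∀ D' : Finset (Finset α),
    Relation.ReflTransGen (fun X Y => ∃ v, Y = delVert X v ∨ Y = contract X v) D D' →
    HasSimpVertex D'

/-!
Deleting `e` from `C` only enlarges the dual complex `Γ`, and every new face lies in some
`V \ K` with `e ⊆ K`, hence avoids `v`. So `link_Γ(v)` does not grow while `Γ − v` does not
shrink, and a face of the link that is not a facet of `Γ − v` stays a non-facet. For the second
claim, a circuit `G ∋ v` contains `e` iff `G \ {v}` contains `e \ {v}`.
-/

lemma mem_complexOf {D : Finset (Finset α)} {F : Finset α} :
    F ∈ complexOf D ↔ ∃ G ∈ D, F ⊆ G := by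
  simp [complexOf]

lemma isComplex_complexOf (D : Finset (Finset α)) : IsComplex (complexOf D) := by
  intro F hF G hGF
  obtain ⟨H, hH, hFH⟩ := mem_complexOf.mp hF
  exact mem_complexOf.mpr ⟨H, hH, hGF.trans hFH⟩

lemma complexOf_mono {D D' : Finset (Finset α)} (h : D ⊆ D') :
    complexOf D ⊆ complexOf D' := by
  intro F hF
  obtain ⟨G, hG, hFG⟩ := mem_complexOf.mp hF
  exact mem_complexOf.mpr ⟨G, h hG, hFG⟩

lemma facets_complexOf_of_card_eq {D : Finset (Finset α)} {c : ℕ}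
    (h : ∀ F ∈ D, F.card = c) : facets (complexOf D) = D := by
  ext F
  simp only [facets, Finset.mem_filter, mem_complexOf]
  constructor
  · rintro ⟨⟨G, hG, hFG⟩, hmax⟩
    rwa [hmax G ⟨G, hG, le_rfl⟩ hFG]
  · intro hF
    refine ⟨⟨F, hF, le_rfl⟩, ?_⟩
    rintro G ⟨H, hH, hGH⟩ hFG
    refine Finset.eq_of_subset_of_card_le hFG ?_
    rw [h F hF, ← h H hH]
    exact Finset.card_le_card hGH

lemma mem_facets_of_subset {Δ Δ' : Finset (Finset α)} {F : Finset α}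
    (hF : F ∈ Δ) (hsub : Δ ⊆ Δ') (hfac : F ∈ facets Δ') : F ∈ facets Δ :=
  Finset.mem_filter.mpr ⟨hF, fun G hG => (Finset.mem_filter.mp hfac).2 G (hsub hG)⟩

lemma link_complexOf (D : Finset (Finset α)) (v : α) :
    link (complexOf D) v = complexOf (link D v) := by
  ext F
  simp only [link, Finset.mem_image, Finset.mem_filter, mem_complexOf]
  constructor
  · rintro ⟨G, ⟨⟨H, hH, hGH⟩, hvG⟩, rfl⟩
    exact ⟨H.erase v, ⟨H, ⟨hH, hGH hvG⟩, rfl⟩, Finset.erase_subset_erase v hGH⟩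
  · rintro ⟨K, ⟨H, ⟨hH, hvH⟩, rfl⟩, hFK⟩
    have hvF : v ∉ F := fun hvF => (Finset.mem_erase.mp (hFK hvF)).1 rfl
    refine ⟨insert v F, ⟨⟨H, hH, ?_⟩, Finset.mem_insert_self v F⟩, Finset.erase_insert hvF⟩
    exact Finset.insert_subset hvH (hFK.trans (Finset.erase_subset v H))

lemma link_subset_link {D D' : Finset (Finset α)} {v : α} (h : ∀ G ∈ D', v ∈ G → G ∈ D) :
    link D' v ⊆ link D v := by
  intro F hF
  simp only [link, Finset.mem_image, Finset.mem_filter] at hF ⊢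
  obtain ⟨G, ⟨hG, hvG⟩, rfl⟩ := hF
  exact ⟨G, ⟨h G hG hvG, hvG⟩, rfl⟩

lemma link_subset_delVert {Δ : Finset (Finset α)} (hΔ : IsComplex Δ) (v : α) :
    link Δ v ⊆ delVert Δ v := by
  intro F hF
  simp only [link, Finset.mem_image, Finset.mem_filter] at hF
  obtain ⟨G, ⟨hG, -⟩, rfl⟩ := hF
  exact Finset.mem_filter.mpr ⟨hΔ G hG _ (Finset.erase_subset v G), Finset.notMem_erase v G⟩

lemma card_of_mem_link {C : Finset (Finset α)} {c : ℕ} (hC : ∀ G ∈ C, G.card = c + 1)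
    {v : α} {F : Finset α} (hF : F ∈ link C v) : F.card = c := by
  simp only [link, Finset.mem_image, Finset.mem_filter] at hF
  obtain ⟨G, ⟨hG, hvG⟩, rfl⟩ := hF
  rw [Finset.card_erase_of_mem hvG, hC G hG, Nat.add_sub_cancel]

lemma link_delMS (C : Finset (Finset α)) (e : Finset α) (v : α) :
    link (delMS C e) v = delMS (link C v) (e.erase v) := by
  have key : ∀ G : Finset α, v ∈ G → (e.erase v ⊆ G.erase v ↔ e ⊆ G) := fun G hvG => by
    rw [← Finset.subset_insert_iff, Finset.insert_erase hvG]
  ext F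
  simp only [link, delMS, Finset.mem_filter, Finset.mem_image]
  constructor
  · rintro ⟨G, ⟨⟨hG, heG⟩, hvG⟩, rfl⟩
    exact ⟨⟨G, ⟨hG, hvG⟩, rfl⟩, by rwa [key G hvG]⟩
  · rintro ⟨⟨G, ⟨hG, hvG⟩, rfl⟩, heG⟩
    exact ⟨G, ⟨⟨hG, by rwa [← key G hvG]⟩, hvG⟩, rfl⟩

lemma clutterDual_anti (V : Finset α) (c : ℕ) {C C' : Finset (Finset α)} (h : C' ⊆ C) :
    clutterDual V c C ⊆ clutterDual V c C' :=
  Finset.image_subset_image (Finset.sdiff_subset_sdiff le_rfl h)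

lemma mem_clutterDual_of_mem_clutterDual_delMS {V : Finset α} {c : ℕ}
    {C : Finset (Finset α)} {e G : Finset α} {v : α} (hve : v ∈ e)
    (hG : G ∈ clutterDual V c (delMS C e)) (hvG : v ∈ G) : G ∈ clutterDual V c C := by
  simp only [clutterDual, compClutter, Finset.mem_image, Finset.mem_sdiff] at hG ⊢
  obtain ⟨K, ⟨hK, hKe⟩, rfl⟩ := hG
  refine ⟨K, ⟨hK, fun hKC => ?_⟩, rfl⟩
  have heK : e ⊆ K := by simpa [delMS, hKC] using hKe
  exact (Finset.mem_sdiff.mp hvG).2 (heK hve)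

lemma Shedding.of_subset {Γ Γ' : Finset (Finset α)} {v : α} (hshed : Shedding Γ v)
    (hΓ : IsComplex Γ) (hsub : Γ ⊆ Γ') (hlink : link Γ' v ⊆ link Γ v) : Shedding Γ' v :=
  fun F hF hfac => hshed F (hlink hF) <|
    mem_facets_of_subset (link_subset_delVert hΓ v (hlink hF))
      (Finset.filter_subset_filter _ hsub) hfac

theorem shedding_stable_general (V : Finset α) (d : ℕ) (C : Finset (Finset α))
    (hC : IsClutter V (d + 1) C)
    (v : α)
    (hshed : Shedding (complexOf (clutterDual V (d + 1) C)) v)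
    (e : Finset α) (hve : v ∈ e) :
    Shedding (complexOf (clutterDual V (d + 1) (delMS C e))) v ∧
      facets (link (complexOf (delMS C e)) v) =
        delMS (facets (link (complexOf C) v)) (e.erase v) := by
  have hcard : ∀ F ∈ link C v, F.card = d := fun F hF =>
    card_of_mem_link (fun G hG => (hC G hG).2) hF
  refine ⟨hshed.of_subset (isComplex_complexOf _)
    (complexOf_mono (clutterDual_anti V _ (Finset.filter_subset _ C))) ?_, ?_⟩
  · rw [link_complexOf, link_complexOf]
    exact complexOf_mono (link_subset_link fun G hG hvG =>
      mem_clutterDual_of_mem_clutterDual_delMS hve hG hvG)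
  · rw [link_complexOf, link_complexOf, link_delMS, facets_complexOf_of_card_eq hcard]
    exact facets_complexOf_of_card_eq fun F hF => hcard F (Finset.filter_subset _ _ hF)

/-- With `C` a non-complete `d`-clutter on `V`, `v` a shedding vertex of
`Γ = ⟨C^∨⟩`, and `e ∈ MS(C)` with `v ∈ e`: `v` is a shedding vertex of `⟨(C − e)^∨⟩`, and
`Facets(link_{⟨C−e⟩}(v)) = Facets(link_{⟨C⟩}(v)) − e'` where `e' = e \ {v}`. -/
theorem shedding_stable (V : Finset α) (d : ℕ) (C : Finset (Finset α))
    (hC : IsClutter V (d + 1) C) (hnc : C ≠ V.powersetCard (d + 1))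
    (v : α) (hv : v ∈ V)
    (hshed : Shedding (complexOf (clutterDual V (d + 1) C)) v)
    (e : Finset α) (he : IsMS (d + 1) C e) (hve : v ∈ e) :
    Shedding (complexOf (clutterDual V (d + 1) (delMS C e))) v ∧
      facets (link (complexOf (delMS C e)) v) =
        delMS (facets (link (complexOf C) v)) (e.erase v) :=
  shedding_stable_general V d C hC v hshed e hve

end ClutterPaper
end

section
/- Let C be a d-clutter on a finite vertex set V. If C is chordal, then its ascent C^+ (a (d+1)-dimensional uniform clutter) is chordal. -/
namespace ClutterPaper

variable {α : Type*} [DecidableEq α]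

/-!
Induct on the elimination sequence of `C`. If `e` is the first simplicial maximal subcircuit
removed, then `(C − e)⁺` is `C⁺` minus the `(d+2)`-cliques containing `e`, and each of these lies
in the clique `N_C[e]`. They are removed from `C⁺` by deleting the maximal subcircuits
`e ∪ {u}` one at a time: the closed neighbourhood of `e ∪ {u}` in what is left of `C⁺` stays
inside `N_C[e]`, so each of its `(d+2)`-subsets is a clique of `C`, and it survives the earlier
deletions because the neighbourhood cannot contain a set `e ∪ {r}` that was already removed.
-/

lemma mem_ascent {V : Finset α} {c : ℕ} {C : Finset (Finset α)} {A : Finset α} :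
    A ∈ ascent V c C ↔ A ⊆ V ∧ A.card = c + 1 ∧ ∀ F ⊆ A, F.card = c → F ∈ C := by
  simp only [ascent, Finset.mem_filter, Finset.mem_powersetCard, Finset.subset_iff, and_assoc]
  exact and_congr_right fun _ => and_congr_right fun _ =>
    ⟨fun h F hF hc => h ⟨hF, hc⟩, fun h F ⟨hF, hc⟩ => h F hF hc⟩

lemma ascent_empty (V : Finset α) (c : ℕ) : ascent V c (∅ : Finset (Finset α)) = ∅ := by
  refine Finset.eq_empty_of_forall_notMem fun A hA => ?_
  obtain ⟨-, hAc, hAC⟩ := mem_ascent.mp hA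
  obtain ⟨F, hFA, hFc⟩ := Finset.exists_subset_card_eq (show c ≤ A.card by omega)
  exact Finset.notMem_empty F (hAC F hFA hFc)

lemma mem_ascent_of_subset_clique {V N B : Finset α} {c : ℕ} {C : Finset (Finset α)}
    (hN : IsClique V c C N) (hBN : B ⊆ N) (hB : B.card = c + 1) : B ∈ ascent V c C :=
  mem_ascent.mpr ⟨hBN.trans hN.1, hB, fun F hF hFc => hN.2 F (hF.trans hBN) hFc⟩

lemma exists_insert_subset_of_card_lt {e A : Finset α} (heA : e ⊆ A) (h : e.card < A.card) :
    ∃ u ∉ e, insert u e ⊆ A := by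
  obtain ⟨u, huA, hue⟩ := Finset.exists_mem_notMem_of_card_lt_card h
  exact ⟨u, hue, Finset.insert_subset huA heA⟩

lemma exists_insert_subset_of_mem_closedNbhd {V e A : Finset α} {D : Finset (Finset α)}
    {x : α} (hA : A ∈ D) (heA : e ⊆ A) (hx : x ∈ closedNbhd V D e) :
    ∃ B ∈ D, insert x e ⊆ B := by
  rcases Finset.mem_union.mp hx with hxe | hxN
  · exact ⟨A, hA, by rwa [Finset.insert_eq_of_mem hxe]⟩
  · exact ⟨insert x e, (Finset.mem_filter.mp hxN).2, le_rfl⟩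

lemma card_delMS_lt {D : Finset (Finset α)} {f A : Finset α} (hA : A ∈ D) (hfA : f ⊆ A) :
    (delMS D f).card < D.card :=
  Finset.card_lt_card <| (Finset.ssubset_iff_of_subset (Finset.filter_subset _ _)).mpr
    ⟨A, hA, fun h => (Finset.mem_filter.mp h).2 hfA⟩

section SimplicialDeletion

variable {V : Finset α} {c : ℕ} {C : Finset (Finset α)} {e : Finset α}

lemma subset_closedNbhd_of_mem_ascent (hc : e.card + 1 = c) {A : Finset α}
    (hA : A ∈ ascent V c C) (heA : e ⊆ A) : A ⊆ closedNbhd V C e := by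
  obtain ⟨hAV, -, hAC⟩ := mem_ascent.mp hA
  intro x hx
  by_cases hxe : x ∈ e
  · exact Finset.mem_union_left _ hxe
  · refine Finset.mem_union_right _ (Finset.mem_filter.mpr ⟨hAV hx, ?_⟩)
    exact hAC _ (Finset.insert_subset hx heA) (by rw [Finset.card_insert_of_notMem hxe, hc])

lemma ascent_delMS (hc : e.card + 1 = c) :
    ascent V c (delMS C e) = (ascent V c C).filter fun A => ¬ e ⊆ A := by
  ext A
  simp only [Finset.mem_filter, mem_ascent, delMS]
  constructor
  · rintro ⟨hAV, hAc, hAC⟩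
    refine ⟨⟨hAV, hAc, fun F hF hFc => (hAC F hF hFc).1⟩, fun heA => ?_⟩
    obtain ⟨u, hue, huA⟩ := exists_insert_subset_of_card_lt heA (by omega)
    exact (hAC _ huA (by rw [Finset.card_insert_of_notMem hue, hc])).2 (Finset.subset_insert u e)
  · rintro ⟨⟨hAV, hAc, hAC⟩, heA⟩
    exact ⟨hAV, hAc, fun F hF hFc => ⟨hAC F hF hFc, fun heF => heA (heF.trans hF)⟩⟩

variable (V c C e) in
/-- What is left of `C⁺` after deleting the maximal subcircuits `e ∪ {r}`, `r ∈ R`. -/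
def ascentAvoiding (R : Finset α) : Finset (Finset α) :=
  (ascent V c C).filter fun A => ∀ r ∈ R, ¬ insert r e ⊆ A

@[simp]
lemma ascentAvoiding_empty : ascentAvoiding V c C e ∅ = ascent V c C :=
  Finset.filter_true_of_mem fun _ _ r hr => absurd hr (Finset.notMem_empty r)

lemma delMS_ascentAvoiding (R : Finset α) (u : α) :
    delMS (ascentAvoiding V c C e R) (insert u e) = ascentAvoiding V c C e (insert u R) := by
  simp only [delMS, ascentAvoiding, Finset.filter_filter, Finset.forall_mem_insert]
  exact Finset.filter_congr fun _ _ => and_comm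

lemma isSMS_insert_ascentAvoiding (he : IsSMS V c C e) {R A : Finset α} {u : α}
    (hA : A ∈ ascentAvoiding V c C e R) (hue : u ∉ e) (huA : insert u e ⊆ A) :
    IsSMS V (c + 1) (ascentAvoiding V c C e R) (insert u e) := by
  obtain ⟨⟨hc, -⟩, hN⟩ := he
  set D := ascentAvoiding V c C e R
  have hD : ∀ B ∈ D, B ∈ ascent V c C := fun B hB => (Finset.mem_filter.mp hB).1
  have hNbhd : ∀ x ∈ closedNbhd V D (insert u e), ∃ B ∈ D, insert x (insert u e) ⊆ B :=
    fun x => exists_insert_subset_of_mem_closedNbhd hA huA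
  have hNN : closedNbhd V D (insert u e) ⊆ closedNbhd V C e := fun x hx => by
    obtain ⟨B, hB, hxB⟩ := hNbhd x hx
    have heB : e ⊆ B := (Finset.subset_insert u e).trans ((Finset.subset_insert x _).trans hxB)
    exact subset_closedNbhd_of_mem_ascent hc (hD B hB) heB (hxB (Finset.mem_insert_self x _))
  refine ⟨⟨by rw [Finset.card_insert_of_notMem hue, hc], A, hA, huA⟩, hNN.trans hN.1,
    fun B hBN hBc => Finset.mem_filter.mpr ⟨mem_ascent_of_subset_clique hN (hBN.trans hNN) hBc,
      fun r hr hrB => ?_⟩⟩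
  -- `e ∪ {r}` already lies in a member of `D`, so it cannot have been deleted.
  obtain ⟨B', hB', hrB'⟩ := hNbhd r (hBN (hrB (Finset.mem_insert_self r e)))
  exact (Finset.mem_filter.mp hB').2 r hr <|
    (Finset.insert_subset_insert r (Finset.subset_insert u e)).trans hrB'

lemma ascentAvoiding_eq_ascent_delMS (hc : e.card + 1 = c) {R : Finset α}
    (h : ∀ A ∈ ascentAvoiding V c C e R, ¬ e ⊆ A) :
    ascentAvoiding V c C e R = ascent V c (delMS C e) := by
  rw [ascent_delMS hc]
  ext A
  simp only [ascentAvoiding, Finset.mem_filter]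
  exact ⟨fun hA => ⟨hA.1, h A (Finset.mem_filter.mpr hA)⟩,
    fun hA => ⟨hA.1, fun r _ hrA => hA.2 ((Finset.subset_insert r e).trans hrA)⟩⟩

theorem chordal_ascentAvoiding (he : IsSMS V c C e)
    (hdel : Chordal V (c + 1) (ascent V c (delMS C e))) (R : Finset α) :
    Chordal V (c + 1) (ascentAvoiding V c C e R) := by
  by_cases hR : ∃ A ∈ ascentAvoiding V c C e R, e ⊆ A
  · obtain ⟨A, hA, heA⟩ := hR
    have hAc := (mem_ascent.mp (Finset.mem_filter.mp hA).1).2.1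
    obtain ⟨u, hue, huA⟩ := exists_insert_subset_of_card_lt heA (by rw [hAc, ← he.1.1]; omega)
    refine Chordal.step _ (isSMS_insert_ascentAvoiding he hA hue huA) ?_
    rw [delMS_ascentAvoiding]
    exact chordal_ascentAvoiding he hdel (insert u R)
  · push Not at hR
    rw [ascentAvoiding_eq_ascent_delMS he.1.1 hR]
    exact hdel
termination_by (ascentAvoiding V c C e R).card
decreasing_by
  rw [← delMS_ascentAvoiding]
  exact card_delMS_lt hA huA

end SimplicialDeletion

theorem chordal_ascent_general (V : Finset α) (d : ℕ) (C : Finset (Finset α))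
    (h : Chordal V (d + 1) C) :
    Chordal V (d + 2) (ascent V (d + 1) C) := by
  induction h with
  | empty => rw [ascent_empty]; exact Chordal.empty
  | step e he _ ih => simpa only [ascentAvoiding_empty] using chordal_ascentAvoiding he ih ∅

/-- If the `d`-clutter `C` is chordal, then so is its ascent `C⁺`. -/
theorem chordal_ascent (V : Finset α) (d : ℕ) (C : Finset (Finset α))
    (hC : IsClutter V (d + 1) C) (h : Chordal V (d + 1) C) :
    Chordal V (d + 2) (ascent V (d + 1) C) :=
  chordal_ascent_general V d C h

end ClutterPaper
end
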